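/- Let S be a finite nonempty set of unit vectors in ℝ^n such that (1/(2n)) I_n ⪯ (1/|S|) Σ_{x∈S} x x^T. Then for every unit vector w ∈ ℝ^n, the fraction of points x ∈ S with |w · x| ≥ 1/(2√n) is at least 1/(4n). -/
import Mathlib


open scoped RealInnerProductSpace

/-- Finite-sample margin lemma: if a finite nonempty set `S` of unit vectors in `ℝ^n`
is in `1/2`-approximate radial isotropic position (its empirical second-moment matrix
dominates `(1/(2n)) Iₙ` in the Loewner order, expressed via quadratic forms), then for
every unit vector `w`, at least a `1/(4n)` fraction of `S` has `|w·x| ≥ 1/(2√n)`. -/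
theorem finite_margin_lemma {n : ℕ} (hn : 1 ≤ n)
    (S : Finset (EuclideanSpace ℝ (Fin n))) (hS : S.Nonempty)
    (hunit : ∀ x ∈ S, ‖x‖ = 1)
    (hiso : ∀ v : EuclideanSpace ℝ (Fin n),
      (1 / (2 * n)) * ‖v‖ ^ 2 ≤ (1 / (S.card : ℝ)) * ∑ x ∈ S, ⟪v, x⟫ ^ 2)
    (w : EuclideanSpace ℝ (Fin n)) (hw : ‖w‖ = 1) :
    1 / (4 * n) ≤
      (({x ∈ (S : Set (EuclideanSpace ℝ (Fin n))) |
          1 / (2 * Real.sqrt n) ≤ |⟪w, x⟫|}).ncard : ℝ) / (S.card : ℝ) := by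
  classical
  set P : EuclideanSpace ℝ (Fin n) → Prop :=
    fun x => 1 / (2 * Real.sqrt n) ≤ |⟪w, x⟫| with hP
  set T : Finset (EuclideanSpace ℝ (Fin n)) := S.filter P with hT
  have hset : {x ∈ (S : Set (EuclideanSpace ℝ (Fin n))) | P x} = (T : Set _) := by
    ext x; simp [hT]
  rw [hset, Set.ncard_coe_finset]
  have hn0 : (0 : ℝ) < n := by exact_mod_cast hn
  have hcard : (0 : ℝ) < S.card := by exact_mod_cast Finset.card_pos.mpr hS
  have hsqrt : (Real.sqrt n) ^ 2 = n := Real.sq_sqrt (le_of_lt hn0)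
  -- bound the sum
  have hsum : ∑ x ∈ S, ⟪w, x⟫ ^ 2 ≤ (T.card : ℝ) + (S.card : ℝ) * (1 / (4 * n)) := by
    rw [← Finset.sum_filter_add_sum_filter_not S P]
    have h1 : ∑ x ∈ S.filter P, ⟪w, x⟫ ^ 2 ≤ (T.card : ℝ) := by
      rw [hT]
      calc ∑ x ∈ S.filter P, ⟪w, x⟫ ^ 2 ≤ ∑ x ∈ S.filter P, 1 := by
            apply Finset.sum_le_sum
            intro x hx
            have hxS : x ∈ S := Finset.mem_filter.mp hx |>.1
            have := abs_real_inner_le_norm w x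
            rw [hw, hunit x hxS] at this
            have h2 : |⟪w, x⟫| ≤ 1 := by simpa using this
            nlinarith [sq_abs (⟪w, x⟫), abs_nonneg (⟪w, x⟫)]
        _ = (T.card : ℝ) := by simp [hT]
    have h2 : ∑ x ∈ S.filter (¬ P ·), ⟪w, x⟫ ^ 2 ≤ (S.card : ℝ) * (1 / (4 * n)) := by
      calc ∑ x ∈ S.filter (¬ P ·), ⟪w, x⟫ ^ 2 ≤ ∑ x ∈ S.filter (¬ P ·), (1 / (4 * n) : ℝ) := by
            apply Finset.sum_le_sum
            intro x hx
            have hxP : ¬ P x := (Finset.mem_filter.mp hx).2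
            have hlt : |⟪w, x⟫| < 1 / (2 * Real.sqrt n) := lt_of_not_ge hxP
            have : ⟪w, x⟫ ^ 2 ≤ (1 / (2 * Real.sqrt n)) ^ 2 := by
              rw [← sq_abs]
              apply pow_le_pow_left₀ (abs_nonneg _) (le_of_lt hlt)
            refine this.trans_eq ?_
            rw [div_pow, mul_pow, hsqrt]
            norm_num
        _ = ((S.filter (¬ P ·)).card : ℝ) * (1 / (4 * n)) := by
            rw [Finset.sum_const, nsmul_eq_mul]
        _ ≤ (S.card : ℝ) * (1 / (4 * n)) := by
            apply mul_le_mul_of_nonneg_right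
            · exact_mod_cast Finset.card_filter_le S _
            · positivity
    linarith
  have hkey := hiso w
  rw [hw] at hkey
  have hkey2 : (1 : ℝ) / (2 * n) ≤ (1 / (S.card : ℝ)) * ((T.card : ℝ) + (S.card : ℝ) * (1 / (4 * n))) := by
    refine hkey.trans_eq' ?_ |>.trans ?_
    · ring
    · apply mul_le_mul_of_nonneg_left hsum
      positivity
  have heq : ((T.card : ℝ) + (S.card : ℝ) * (1 / (4 * n))) / (S.card : ℝ)
      = (T.card : ℝ) / (S.card : ℝ) + 1 / (4 * n) := by
    rw [add_div, mul_comm (S.card : ℝ), mul_div_assoc, div_self (ne_of_gt hcard), mul_one]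
  rw [one_div_mul_eq_div] at hkey2
  rw [heq] at hkey2
  have hsplit : 1 / (2 * (n : ℝ)) = 1 / (4 * n) + 1 / (4 * n) := by
    field_simp; ring
  linarith
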